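/- arXiv:math/0701010 — 12 statements merged into one kernel-verified Lean document; each statement's English description precedes it below -/
import Mathlib

section
/- Let H be a commutative bialgebra over a commutative ring k, with coproduct Δ, counit ε and unit u. For k-linear maps f, g : H → H let f ⋆ g := m ∘ (f ⊗ g) ∘ Δ denote convolution, and let id^{⋆n} denote the n-th convolution power of the identity map (with id^{⋆0} = u ∘ ε). Then for all natural numbers n and k, the composite of id^{⋆n} with id^{⋆k} equals id^{⋆(nk)}: id^{⋆n} ∘ id^{⋆k} = id^{⋆(nk)} (the Adams operations are multiplicative under composition). -/
/-!
Since `H` is commutative, `id^{⋆n}` is the `n`-th power of `id` in the convolution monoid of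
algebra endomorphisms of `H`, and post-composing with an algebra map is a monoid map for
convolution. Hence `id^{⋆n} ∘ id^{⋆m} = (id^{⋆n} ∘ id)^{⋆m} = (id^{⋆n})^{⋆m} = id^{⋆nm}`.
-/

open TensorProduct

variable {k H : Type*} [CommSemiring k] [CommSemiring H] [Bialgebra k H]

/-- Convolution product of linear endomorphisms of a bialgebra:
`f ⋆ g := m ∘ (f ⊗ g) ∘ Δ`. -/
noncomputable def conv (f g : H →ₗ[k] H) : H →ₗ[k] H :=
  LinearMap.mul' k H ∘ₗ TensorProduct.map f g ∘ₗ Coalgebra.comul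

/-- Convolution powers of the identity map: `id^{⋆0} = u ∘ ε`,
`id^{⋆(n+1)} = id^{⋆n} ⋆ id`. -/
noncomputable def convPow : ℕ → (H →ₗ[k] H)
  | 0 => Algebra.linearMap k H ∘ₗ Coalgebra.counit
  | n + 1 => conv (convPow n) LinearMap.id

open WithConv

theorem AlgHom.comp_convPow_distrib {R A B C : Type*} [CommSemiring R] [CommSemiring A]
    [CommSemiring B] [Semiring C] [Bialgebra R C] [Algebra R A] [Algebra R B]
    (h : A →ₐ[R] B) (f : WithConv (C →ₐ[R] A)) (n : ℕ) :
    h.comp (f ^ n).ofConv = (toConv (h.comp f.ofConv) ^ n).ofConv := by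
  induction n with
  | zero => ext; simp
  | succ n ih => rw [pow_succ, pow_succ, comp_convMul_distrib, ih]

theorem convPow_eq_toLinearMap_pow (n : ℕ) :
    convPow (k := k) (H := H) n = (toConv (AlgHom.id k H) ^ n).ofConv.toLinearMap := by
  induction n with
  | zero => rfl
  | succ n ih => rw [pow_succ, convPow, ih]; rfl

/-- For a commutative bialgebra `H`, the Adams operations `id^{⋆n}` are multiplicative
under composition: `id^{⋆n} ∘ id^{⋆k} = id^{⋆(nk)}`. -/
theorem convPow_comp_convPow (n m : ℕ) :
    (convPow (k := k) (H := H) n) ∘ₗ (convPow (k := k) (H := H) m) =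
      convPow (k := k) (H := H) (n * m) := by
  simp only [convPow_eq_toLinearMap_pow]
  rw [← AlgHom.comp_toLinearMap, AlgHom.comp_convPow_distrib, AlgHom.comp_id, toConv_ofConv,
    pow_mul]
end

section
/- For all natural numbers n ≥ 1 and d with 0 ≤ d ≤ n − 1, the following identity holds in ℚ: Σ_{j=d+1}^{n} ((−1)^{j−1}/j) · C(n−d−1, j−d−1) = (−1)^d / (n · C(n−1, d)), where C(a,b) denotes the binomial coefficient. (This computes the coefficient of a permutation with d descents in the first Eulerian idempotent applied to a word of n distinct letters.) -/
open Finset Nat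

/-! Substituting `j = d + 1 + k` and `m = n - d - 1`, the sum becomes
`(-1)^d Σ_k (-1)^k C(m, k) / (d + 1 + k)`, which up to the sign `(-1)^m` is the `m`-th forward
difference of `y ↦ 1/y` at `d + 1`, namely `m! / ((d + 1)(d + 2) ⋯ (d + m + 1))` (the discrete
form of the Beta integral `∫₀¹ x^d (1 - x)^m dx`). That rising factorial is
`n · C(n - 1, d) · m!`. -/

theorem fwdDiff_iter_inv {K : Type*} [Field K] (m : ℕ) (x : K)
    (hx : ∀ k ≤ m, x + k ≠ 0) :
    (fwdDiff 1)^[m] (fun y : K ↦ y⁻¹) x =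
      (-1) ^ m * m ! / ∏ k ∈ range (m + 1), (x + k) := by
  induction m generalizing x with
  | zero => simp
  | succ m ih =>
    have hshift : ∀ k ≤ m, x + 1 + k ≠ 0 := fun k hk ↦ by
      simpa [add_assoc, add_comm (1 : K)] using hx (k + 1) (by omega)
    rw [Function.iterate_succ_apply', fwdDiff, ih (x + 1) hshift, ih x fun k hk ↦ hx k (by omega)]
    set P := ∏ k ∈ range m, (x + 1 + k)
    have hP : P ≠ 0 := prod_ne_zero_iff.2 fun k hk ↦ hshift k (mem_range.1 hk).le
    have hx0 : x ≠ 0 := by simpa using hx 0 (by omega)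
    have hlast : x + 1 + m ≠ 0 := hshift m le_rfl
    have hprod₁ : ∏ k ∈ range (m + 1), (x + 1 + k) = P * (x + 1 + m) := prod_range_succ _ _
    have hprod₀ : ∏ k ∈ range (m + 1), (x + k) = x * P := by
      rw [prod_range_succ', mul_comm]
      simp [P, add_assoc, add_comm (1 : K)]
    have hprod₂ : ∏ k ∈ range (m + 2), (x + k) = x * P * (x + 1 + m) := by
      rw [prod_range_succ, hprod₀]; push_cast; ring
    rw [hprod₀, hprod₁, hprod₂]
    push_cast [factorial_succ]
    field_simp
    ring

theorem sum_range_neg_one_pow_mul_choose_div {K : Type*} [Field K] (m : ℕ) (x : K)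
    (hx : ∀ k ≤ m, x + k ≠ 0) :
    ∑ k ∈ range (m + 1), (-1) ^ k * m.choose k / (x + k) =
      m ! / ∏ k ∈ range (m + 1), (x + k) := by
  have hsign : ∀ k ≤ m, (-1 : K) ^ k = (-1) ^ m * (-1) ^ (m - k) := fun k hk ↦ by
    obtain ⟨j, rfl⟩ := Nat.exists_eq_add_of_le hk
    rw [Nat.add_sub_cancel_left, pow_add, mul_assoc, ← mul_pow]
    simp
  calc ∑ k ∈ range (m + 1), (-1) ^ k * m.choose k / (x + k)
      = (-1) ^ m * (fwdDiff 1)^[m] (fun y : K ↦ y⁻¹) x := by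
        rw [fwdDiff_iter_eq_sum_shift, mul_sum]
        refine sum_congr rfl fun k hk ↦ ?_
        rw [hsign k (by simpa [Nat.lt_succ_iff] using hk)]
        simp [div_eq_mul_inv, mul_assoc]
    _ = m ! / ∏ k ∈ range (m + 1), (x + k) := by
        rw [fwdDiff_iter_inv m x hx, ← mul_div_assoc, ← mul_assoc, ← pow_add,
          Even.neg_one_pow ⟨m, rfl⟩, one_mul]

theorem ascFactorial_succ_eq_mul_choose_mul_factorial (d m : ℕ) :
    (d + 1).ascFactorial (m + 1) = (m + d + 1) * (m + d).choose d * m ! := by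
  apply Nat.eq_of_mul_eq_mul_left (factorial_pos d)
  rw [factorial_mul_ascFactorial, show d + (m + 1) = m + d + 1 by ring, factorial_succ,
    ← add_choose_mul_factorial_mul_factorial m d]
  ring

/-- The coefficient computation for the first Eulerian idempotent: for `1 ≤ n` and
`d ≤ n - 1`,
`Σ_{j=d+1}^{n} ((−1)^{j−1}/j) · C(n−d−1, j−d−1) = (−1)^d / (n · C(n−1, d))` in `ℚ`. -/
theorem eulerian_idempotent_coefficient (n d : ℕ) (hn : 1 ≤ n) (hd : d ≤ n - 1) :
    ∑ j ∈ Finset.Icc (d + 1) n,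
        ((-1 : ℚ) ^ (j - 1) / (j : ℚ)) * ((n - d - 1).choose (j - d - 1) : ℚ) =
      (-1 : ℚ) ^ d / ((n : ℚ) * ((n - 1).choose d : ℚ)) := by
  obtain ⟨m, rfl⟩ : ∃ m, n = m + d + 1 := ⟨n - d - 1, by omega⟩
  have hprod :
      ∏ k ∈ range (m + 1), ((d + 1 : ℕ) + k : ℚ) = (m + d + 1) * (m + d).choose d * m ! := by
    exact_mod_cast (ascFactorial_eq_prod_range (d + 1) (m + 1)).symm.trans
      (ascFactorial_succ_eq_mul_choose_mul_factorial d m)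
  calc ∑ j ∈ Icc (d + 1) (m + d + 1),
        (-1 : ℚ) ^ (j - 1) / j * (m + d + 1 - d - 1).choose (j - d - 1)
      = (-1) ^ d * ∑ k ∈ range (m + 1), (-1) ^ k * m.choose k / ((d + 1 : ℕ) + k : ℚ) := by
        rw [← Ico_add_one_right_eq_Icc, sum_Ico_eq_sum_range, mul_sum,
          show m + d + 1 + 1 - (d + 1) = m + 1 by omega]
        refine sum_congr rfl fun k _ ↦ ?_
        rw [show d + 1 + k - 1 = d + k by omega, show d + 1 + k - d - 1 = k by omega,
          show m + d + 1 - d - 1 = m by omega, pow_add]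
        push_cast
        ring
    _ = (-1) ^ d / ((m + d + 1 : ℕ) * (m + d + 1 - 1).choose d) := by
        rw [sum_range_neg_one_pow_mul_choose_div m _ fun k _ ↦ by positivity, hprod,
          show m + d + 1 - 1 = m + d by omega]
        field_simp
        push_cast
        ring
end

section
/- Let A be a commutative ring (an algebra over a commutative ring k), θ ∈ k, and let δ : A → A be a skewderivation of weight θ, i.e. a k-linear map with δ(ab) = a δ(b) + δ(a) b − θ δ(a) δ(b) for all a, b ∈ A. Then for every a ∈ A and every natural number n ≥ 1: δ(aⁿ) = Σ_{i=1}^{n} C(n,i) (−θ)^{i−1} a^{n−i} δ(a)^{i}. -/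
open Finset

/-- For a skewderivation `δ` of weight `θ` on a commutative algebra `A`
(`δ(ab) = aδ(b) + δ(a)b − θδ(a)δ(b)`) and `n ≥ 1`:
`δ(aⁿ) = Σ_{i=1}^{n} C(n,i) (−θ)^{i−1} a^{n−i} δ(a)^{i}`. -/
theorem skewderivation_pow {k A : Type*} [CommRing k] [CommRing A] [Algebra k A]
    (θ : k) (δ : A →ₗ[k] A)
    (hδ : ∀ a b : A, δ (a * b) = a * δ b + δ a * b - θ • (δ a * δ b))
    (a : A) (n : ℕ) (hn : 1 ≤ n) :
    δ (a ^ n) =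
      ∑ i ∈ Finset.Icc 1 n, n.choose i • ((-θ) ^ (i - 1) • (a ^ (n - i) * (δ a) ^ i)) := by
  induction n with
  | zero => omega
  | succ n ih =>
    rcases Nat.eq_zero_or_pos n with h0 | h1
    · subst h0; simp
    · have ih' := ih h1
      have key : δ (a ^ (n+1)) = a * δ (a^n) + δ a * a^n - θ • (δ a * δ (a^n)) := by
        rw [pow_succ', hδ]
      rw [key, ih']
      simp only [Algebra.smul_def, nsmul_eq_mul, map_pow]
      set X := algebraMap k A (-θ) with hX
      have hT : (algebraMap k A) θ = -X := by simp [hX]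
      rw [hT]
      set D := δ a
      rw [← Finset.Ico_add_one_right_eq_Icc, ← Finset.Ico_add_one_right_eq_Icc, Finset.sum_Ico_eq_sum_range, Finset.sum_Ico_eq_sum_range]
      norm_num
      have pascal : ∀ j ∈ Finset.range (n+1),
          (((n+1).choose (1+j) : A)) * (X ^ j * (a ^ (n+1-(1+j)) * D ^ (1+j))) =
          ((n.choose (1+j) : A)) * (X ^ j * (a ^ (n+1-(1+j)) * D ^ (1+j))) +
          ((n.choose j : A)) * (X ^ j * (a ^ (n+1-(1+j)) * D ^ (1+j))) := by
        intro j hj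
        rw [show 1+j = j+1 from by omega, Nat.choose_succ_succ']
        push_cast
        ring
      rw [Finset.sum_congr rfl pascal, Finset.sum_add_distrib]
      have s1 : ∑ j ∈ Finset.range (n+1),
          ((n.choose (1+j) : A)) * (X ^ j * (a ^ (n+1-(1+j)) * D ^ (1+j))) =
          a * ∑ j ∈ Finset.range n,
            ((n.choose (1+j) : A)) * (X ^ j * (a ^ (n-(1+j)) * D ^ (1+j))) := by
        rw [Finset.sum_range_succ, Nat.choose_eq_zero_of_lt (by omega), Finset.mul_sum]
        push_cast
        rw [zero_mul, add_zero]
        refine Finset.sum_congr rfl fun j hj => ?_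
        have hj' : j < n := Finset.mem_range.mp hj
        rw [show n+1-(1+j) = (n-(1+j))+1 from by omega, pow_succ]
        ring
      have s2 : ∑ j ∈ Finset.range (n+1),
          ((n.choose j : A)) * (X ^ j * (a ^ (n+1-(1+j)) * D ^ (1+j))) =
          D * a^n + X * (D * ∑ j ∈ Finset.range n,
            ((n.choose (1+j) : A)) * (X ^ j * (a ^ (n-(1+j)) * D ^ (1+j)))) := by
        rw [Finset.sum_range_succ', Finset.mul_sum, Finset.mul_sum, add_comm]
        congr 1
        · norm_num [mul_comm]
        · refine Finset.sum_congr rfl fun j hj => ?_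
          rw [show n+1-(1+(j+1)) = n-(1+j) from by omega, show 1+(j+1) = (1+j)+1 from by omega,
            pow_succ X j, pow_succ D (1+j), show (1+j:ℕ) = j+1 from by omega]
          ring
      rw [s1, s2]
      ring
end

section
/- Let A be a commutative ring (an algebra over a commutative ring k), θ ∈ k, and let δ : A → A be a skewderivation of weight θ, i.e. a k-linear map with δ(ab) = a δ(b) + δ(a) b − θ δ(a) δ(b). Then for all a, b ∈ A and every natural number n: δⁿ(ab) = Σ_{i=0}^{n} C(n,i) Σ_{j=0}^{n−i} C(n−i,j) (−θ)^{i} δ^{n−j}(a) δ^{i+j}(b), where δ⁰ = id and δ^{m} denotes the m-fold iterate of δ. -/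
open Finset

/-- For a skewderivation `δ` of weight `θ` on a commutative algebra `A`
(`δ(ab) = aδ(b) + δ(a)b − θδ(a)δ(b)`) and any `n`:
`δⁿ(ab) = Σ_{i=0}^{n} C(n,i) Σ_{j=0}^{n−i} C(n−i,j) (−θ)^{i} δ^{n−j}(a) δ^{i+j}(b)`. -/
theorem skewderivation_iterate_mul {k A : Type*} [CommRing k] [CommRing A] [Algebra k A]
    (θ : k) (δ : Module.End k A)
    (hδ : ∀ a b : A, δ (a * b) = a * δ b + δ a * b - θ • (δ a * δ b))
    (a b : A) (n : ℕ) :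
    (δ ^ n) (a * b) =
      ∑ i ∈ Finset.range (n + 1), ∑ j ∈ Finset.range (n - i + 1),
        (n.choose i * (n - i).choose j) •
          ((-θ) ^ i • ((δ ^ (n - j)) a * (δ ^ (i + j)) b)) := by
  classical
  open MvPolynomial in
  -- The linear map sending X₀^p X₁^q to δ^p a * δ^q b
  set Φ : MvPolynomial (Fin 2) k →ₗ[k] A :=
    (MvPolynomial.basisMonomials (Fin 2) k).constr ℕ
      (fun m : Fin 2 →₀ ℕ => (δ ^ (m 0)) a * (δ ^ (m 1)) b) with hΦdef
  have hΦ : ∀ m : Fin 2 →₀ ℕ, Φ (monomial m 1) = (δ ^ (m 0)) a * (δ ^ (m 1)) b := by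
    intro m
    have := Module.Basis.constr_basis (MvPolynomial.basisMonomials (Fin 2) k) ℕ
      (fun m : Fin 2 →₀ ℕ => (δ ^ (m 0)) a * (δ ^ (m 1)) b) m
    rw [MvPolynomial.coe_basisMonomials] at this
    exact this
  set w : MvPolynomial (Fin 2) k := X 0 + X 1 - C θ * (X 0 * X 1) with hwdef
  have hsucc : ∀ (p : ℕ) (x : A), (δ ^ (p + 1)) x = δ ((δ ^ p) x) := by
    intro p x
    rw [pow_succ']; rfl
  have key : ∀ p : MvPolynomial (Fin 2) k, Φ (w * p) = δ (Φ p) := by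
    have : Φ.comp (LinearMap.mulLeft k w) = (δ : A →ₗ[k] A).comp Φ := by
      apply (MvPolynomial.basisMonomials (Fin 2) k).ext
      intro m
      rw [MvPolynomial.coe_basisMonomials]
      simp only [LinearMap.comp_apply, LinearMap.mulLeft_apply, hΦ]
      have hw : w * monomial m 1 =
          monomial (Finsupp.single 0 1 + m) 1 + monomial (Finsupp.single 1 1 + m) 1
            - θ • monomial (Finsupp.single 0 1 + (Finsupp.single 1 1 + m)) 1 := by
        rw [hwdef]
        rw [show (X 0 : MvPolynomial (Fin 2) k) = monomial (Finsupp.single 0 1) 1 from rfl,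
            show (X 1 : MvPolynomial (Fin 2) k) = monomial (Finsupp.single 1 1) 1 from rfl]
        simp only [sub_mul, add_mul, mul_assoc, monomial_mul, one_mul, mul_one,
            MvPolynomial.C_mul_monomial, MvPolynomial.smul_monomial, add_assoc, smul_eq_mul]
      rw [hw, map_sub, map_add, map_smul, hΦ, hΦ, hΦ, hδ]
      have e0 : ((Finsupp.single (0 : Fin 2) 1 + m : Fin 2 →₀ ℕ) 0) = m 0 + 1 := by
        simp [Finsupp.add_apply]; try omega
      have e1 : ((Finsupp.single (0 : Fin 2) 1 + m : Fin 2 →₀ ℕ) 1) = m 1 := by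
        simp [Finsupp.add_apply, Finsupp.single_apply]
      have e2 : ((Finsupp.single (1 : Fin 2) 1 + m : Fin 2 →₀ ℕ) 0) = m 0 := by
        simp [Finsupp.add_apply, Finsupp.single_apply]
      have e3 : ((Finsupp.single (1 : Fin 2) 1 + m : Fin 2 →₀ ℕ) 1) = m 1 + 1 := by
        simp [Finsupp.add_apply]; try omega
      have e4 : ((Finsupp.single (0 : Fin 2) 1 + (Finsupp.single 1 1 + m) : Fin 2 →₀ ℕ) 0) = m 0 + 1 := by
        simp [Finsupp.add_apply, Finsupp.single_apply]; try omega
      have e5 : ((Finsupp.single (0 : Fin 2) 1 + (Finsupp.single 1 1 + m) : Fin 2 →₀ ℕ) 1) = m 1 + 1 := by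
        simp [Finsupp.add_apply, Finsupp.single_apply]; try omega
      rw [e0, e1, e2, e3, e4, e5, hsucc, hsucc]
      ring_nf
    intro p
    exact LinearMap.congr_fun this p
  have hpow : ∀ N : ℕ, (δ ^ N) (a * b) = Φ (w ^ N) := by
    intro N
    induction N with
    | zero =>
        have h1 : (w ^ 0 : MvPolynomial (Fin 2) k) = monomial 0 1 := by
          simp [MvPolynomial.monomial_zero']
        rw [h1, hΦ]
        simp
    | succ N ih =>
        rw [pow_succ' w N, key, ← ih, hsucc]
  -- the trinomial expansion in the polynomial ring
  have hident : w ^ n =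
      ∑ i ∈ Finset.range (n + 1), ∑ j ∈ Finset.range (n - i + 1),
        (n.choose i * (n - i).choose j) •
          ((-θ) ^ i • monomial (Finsupp.single 0 (n - j) + Finsupp.single 1 (i + j)) (1 : k)) := by
    have hw' : w = (-(C θ * (X 0 * X 1))) + (X 0 + X 1) := by rw [hwdef]; ring
    rw [hw', add_pow]
    refine Finset.sum_congr rfl fun i hi => ?_
    rw [add_pow, Finset.mul_sum, Finset.sum_mul, ← Finset.sum_range_reflect]
    have hi' : i ≤ n := by simpa using Nat.lt_succ_iff.mp (Finset.mem_range.mp hi)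
    refine Finset.sum_congr rfl fun j hj => ?_
    have hj' : j ≤ n - i := Nat.lt_succ_iff.mp (Finset.mem_range.mp hj)
    have hc : (n - i).choose (n - i - j) = (n - i).choose j := Nat.choose_symm hj'
    have h2 : n - i - (n - i - j) = j := by omega
    simp only [Nat.add_sub_cancel]
    rw [h2, hc]
    have hmono : monomial (Finsupp.single (0 : Fin 2) (n - j) + Finsupp.single 1 (i + j)) (1 : k)
        = X 0 ^ (n - j) * X 1 ^ (i + j) := by
      rw [MvPolynomial.X_pow_eq_monomial, MvPolynomial.X_pow_eq_monomial, monomial_mul, mul_one]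
    rw [hmono, nsmul_eq_mul, MvPolynomial.smul_eq_C_mul, map_pow, map_neg,
        Nat.cast_mul]
    have hnj : n - j = i + (n - i - j) := by omega
    rw [hnj, pow_add, pow_add]
    ring
  rw [hpow, hident, map_sum]
  refine Finset.sum_congr rfl fun i _ => ?_
  rw [map_sum]
  refine Finset.sum_congr rfl fun j _ => ?_
  rw [map_nsmul, map_smul, hΦ]
  simp [Finsupp.add_apply, Finsupp.single_apply]
end

section
/- Let θ be a nonzero real number and let f, g : ℝ → ℝ be functions such that for every x ∈ ℝ the families (n ↦ f(x + θn))_{n≥1} and (n ↦ g(x + θn))_{n≥1} are absolutely summable. Define the summation operator Z by Z(h)(x) := Σ_{n=1}^{∞} θ h(x + θn). Then for every x ∈ ℝ: Z(f)(x) · Z(g)(x) = Z(Z(f)·g)(x) + Z(f·Z(g))(x) + θ · Z(f·g)(x); that is, Z is a Rota–Baxter operator of weight −θ on such functions. -/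
/-- The summation operator `Z(h)(x) := Σ_{n≥1} θ h(x + θn)`. -/
noncomputable def Zop (θ : ℝ) (h : ℝ → ℝ) (x : ℝ) : ℝ :=
  ∑' n : ℕ, θ * h (x + θ * ((n : ℝ) + 1))

/-- Equivalence of `ℕ × ℕ` with the strict upper part `{p | p.2 < p.1}`. -/
def eGT : (ℕ × ℕ) ≃ {p : ℕ × ℕ // p.2 < p.1} where
  toFun q := ⟨(q.1 + q.2 + 1, q.1), by omega⟩
  invFun p := (p.1.2, p.1.1 - p.1.2 - 1)
  left_inv q := by ext <;> simp <;> omega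
  right_inv p := by
    have := p.2
    apply Subtype.ext
    ext <;> simp <;> omega

/-- Equivalence of `ℕ × ℕ` with the strict lower part `{p | p.1 < p.2}`. -/
def eLT : (ℕ × ℕ) ≃ {p : ℕ × ℕ // p.1 < p.2} where
  toFun q := ⟨(q.1, q.1 + q.2 + 1), by omega⟩
  invFun p := (p.1.1, p.1.2 - p.1.1 - 1)
  left_inv q := by ext <;> simp <;> omega
  right_inv p := by
    have := p.2
    apply Subtype.ext
    ext <;> simp <;> omega

/-- Equivalence of `ℕ` with the diagonal, presented as the complement of the
off-diagonal parts. -/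
def eDiag : ℕ ≃ {p : ℕ × ℕ // p ∈ ({p : ℕ × ℕ | p.2 < p.1} ∪ {p : ℕ × ℕ | p.1 < p.2})ᶜ} where
  toFun n := ⟨(n, n), by simp⟩
  invFun p := p.1.1
  left_inv n := rfl
  right_inv p := by
    have h := p.2
    simp only [Set.mem_compl_iff, Set.mem_union, Set.mem_setOf_eq, not_or, not_lt] at h
    apply Subtype.ext
    ext <;> simp <;> omega

/-- The summation operator `Z` is a Rota–Baxter operator of weight `−θ`:
`Z(f)Z(g) = Z(Z(f)g) + Z(fZ(g)) + θZ(fg)` pointwise, for absolutely summable data. -/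
theorem Zop_rota_baxter (θ : ℝ) (hθ : θ ≠ 0) (f g : ℝ → ℝ)
    (hf : ∀ x : ℝ, Summable fun n : ℕ => |f (x + θ * ((n : ℝ) + 1))|)
    (hg : ∀ x : ℝ, Summable fun n : ℕ => |g (x + θ * ((n : ℝ) + 1))|) (x : ℝ) :
    Zop θ f x * Zop θ g x =
      Zop θ (fun y => Zop θ f y * g y) x + Zop θ (fun y => f y * Zop θ g y) x +
        θ * Zop θ (fun y => f y * g y) x := by
  -- abbreviations
  set a : ℕ → ℝ := fun n => θ * f (x + θ * ((n : ℝ) + 1)) with ha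
  set b : ℕ → ℝ := fun n => θ * g (x + θ * ((n : ℝ) + 1)) with hb
  have hna : Summable fun n => ‖a n‖ := by
    have := (hf x).mul_left |θ|
    refine this.congr fun n => ?_
    simp [ha, abs_mul]
  have hnb : Summable fun n => ‖b n‖ := by
    have := (hg x).mul_left |θ|
    refine this.congr fun n => ?_
    simp [hb, abs_mul]
  have hsa : Summable a := hna.of_norm
  have hsb : Summable b := hnb.of_norm
  set F : ℕ × ℕ → ℝ := fun p => a p.1 * b p.2 with hFdef
  have hF : Summable F := summable_mul_of_summable_norm hna hnb
  -- shift identity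
  have hshift : ∀ n k : ℕ,
      x + θ * ((n : ℝ) + 1) + θ * ((k : ℝ) + 1) = x + θ * (((n + k + 1 : ℕ) : ℝ) + 1) := by
    intro n k; push_cast; ring
  -- the three sets
  set S1 : Set (ℕ × ℕ) := {p : ℕ × ℕ | p.2 < p.1} with hS1
  set S2 : Set (ℕ × ℕ) := {p : ℕ × ℕ | p.1 < p.2} with hS2
  have hdisj : Disjoint S1 S2 := by
    rw [Set.disjoint_left]
    rintro ⟨m, n⟩ h1 h2
    simp only [hS1, hS2, Set.mem_setOf_eq] at h1 h2
    omega
  -- summability of restrictions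
  have hF1 : Summable (F ∘ ((↑) : S1 → ℕ × ℕ)) := hF.subtype S1
  have hF2 : Summable (F ∘ ((↑) : S2 → ℕ × ℕ)) := hF.subtype S2
  have hF3 : Summable (F ∘ ((↑) : ((S1 ∪ S2)ᶜ : Set (ℕ × ℕ)) → ℕ × ℕ)) := hF.subtype _
  -- value of the first piece
  have hGTsum : Summable fun q : ℕ × ℕ => a (q.1 + q.2 + 1) * b q.1 := by
    have := (eGT.summable_iff (f := F ∘ ((↑) : S1 → ℕ × ℕ))).2 hF1
    exact this.congr fun q => rfl
  have hA : ∑' (p : S1), F p = Zop θ (fun y => Zop θ f y * g y) x := by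
    show ∑' (p : {p : ℕ × ℕ // p.2 < p.1}), F ↑p = _
    rw [← eGT.tsum_eq (f := fun p : S1 => F p)]
    have h1 : ∑' q : ℕ × ℕ, F (eGT q) = ∑' q : ℕ × ℕ, a (q.1 + q.2 + 1) * b q.1 := rfl
    rw [h1, Summable.tsum_prod' hGTsum hGTsum.prod_factor]
    have h2 : Zop θ (fun y => Zop θ f y * g y) x =
        ∑' n : ℕ, θ * (Zop θ f (x + θ * ((n : ℝ) + 1)) * g (x + θ * ((n : ℝ) + 1))) := rfl
    rw [h2]
    refine tsum_congr fun n => ?_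
    have hz : Zop θ f (x + θ * ((n : ℝ) + 1)) = ∑' k : ℕ, a (n + k + 1) := by
      unfold Zop
      refine tsum_congr fun k => ?_
      rw [ha]
      simp only
      rw [hshift n k]
    show ∑' k : ℕ, a (n + k + 1) * b n = _
    rw [tsum_mul_right, hz]
    simp only [hb]
    ring
  -- value of the second piece
  have hLTsum : Summable fun q : ℕ × ℕ => a q.1 * b (q.1 + q.2 + 1) := by
    have := (eLT.summable_iff (f := F ∘ ((↑) : S2 → ℕ × ℕ))).2 hF2
    exact this.congr fun q => rfl
  have hB : ∑' (p : S2), F p = Zop θ (fun y => f y * Zop θ g y) x := by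
    show ∑' (p : {p : ℕ × ℕ // p.1 < p.2}), F ↑p = _
    rw [← eLT.tsum_eq (f := fun p : S2 => F p)]
    have h1 : ∑' q : ℕ × ℕ, F (eLT q) = ∑' q : ℕ × ℕ, a q.1 * b (q.1 + q.2 + 1) := rfl
    rw [h1, Summable.tsum_prod' hLTsum hLTsum.prod_factor]
    have h2 : Zop θ (fun y => f y * Zop θ g y) x =
        ∑' n : ℕ, θ * (f (x + θ * ((n : ℝ) + 1)) * Zop θ g (x + θ * ((n : ℝ) + 1))) := rfl
    rw [h2]
    refine tsum_congr fun n => ?_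
    have hz : Zop θ g (x + θ * ((n : ℝ) + 1)) = ∑' k : ℕ, b (n + k + 1) := by
      unfold Zop
      refine tsum_congr fun k => ?_
      rw [hb]
      simp only
      rw [hshift n k]
    show ∑' k : ℕ, a n * b (n + k + 1) = _
    rw [tsum_mul_left, hz]
    simp only [ha]
    ring
  -- value of the diagonal piece
  have hC : ∑' (p : ((S1 ∪ S2)ᶜ : Set (ℕ × ℕ))), F p = θ * Zop θ (fun y => f y * g y) x := by
    show ∑' (p : {p : ℕ × ℕ // p ∈ ({p : ℕ × ℕ | p.2 < p.1} ∪ {p : ℕ × ℕ | p.1 < p.2})ᶜ}), F ↑p = _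
    rw [← eDiag.tsum_eq (f := fun p : ((S1 ∪ S2)ᶜ : Set (ℕ × ℕ)) => F p)]
    have h1 : ∑' n : ℕ, F (eDiag n) = ∑' n : ℕ, a n * b n := rfl
    rw [h1]
    have h2 : θ * Zop θ (fun y => f y * g y) x =
        ∑' n : ℕ, θ * (θ * (f (x + θ * ((n : ℝ) + 1)) * g (x + θ * ((n : ℝ) + 1)))) := by
      unfold Zop; rw [← tsum_mul_left]
    rw [h2]
    refine tsum_congr fun n => ?_
    simp only [ha, hb]
    ring
  -- assemble
  have hsum : HasSum F
      (Zop θ (fun y => Zop θ f y * g y) x + Zop θ (fun y => f y * Zop θ g y) x +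
        θ * Zop θ (fun y => f y * g y) x) := by
    have h12 : HasSum (F ∘ ((↑) : ((S1 ∪ S2 : Set (ℕ × ℕ))) → ℕ × ℕ))
        (Zop θ (fun y => Zop θ f y * g y) x + Zop θ (fun y => f y * Zop θ g y) x) := by
      have := HasSum.add_disjoint hdisj (hA ▸ hF1.hasSum) (hB ▸ hF2.hasSum)
      exact this
    exact h12.add_compl (hC ▸ hF3.hasSum)
  have hL : Zop θ f x * Zop θ g x = ∑' p : ℕ × ℕ, F p := by
    unfold Zop
    exact tsum_mul_tsum_of_summable_norm hna hnb
  rw [hL, hsum.tsum_eq]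
end

section
/- Let 0 < q < 1 and let f, g : ℝ → ℝ be functions such that for every x ∈ ℝ the families (n ↦ f(qⁿx))_{n≥0} and (n ↦ g(qⁿx))_{n≥0} are absolutely summable. Define the modified Jackson integral J̄ by J̄(h)(x) := (1−q) Σ_{n=0}^{∞} h(qⁿ x). Then for every x ∈ ℝ: J̄(f)(x) · J̄(g)(x) + (1−q) · J̄(f·g)(x) = J̄(f · J̄(g))(x) + J̄(J̄(f) · g)(x). -/
open Function Set

/-- Summing a function over the range of an injection equals summing its indicator. -/
private lemma tsum_comp_eq_tsum_indicator {β γ : Type*} (F : β → ℝ) (e : γ → β)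
    (he : Function.Injective e) (S : Set β) (hS : Set.range e = S) :
    ∑' c, F (e c) = ∑' b, S.indicator F b := by
  have h1 : ∀ c, F (e c) = S.indicator F (e c) := fun c => by
    rw [Set.indicator_of_mem]; rw [← hS]; exact ⟨c, rfl⟩
  calc ∑' c, F (e c) = ∑' c, S.indicator F (e c) := tsum_congr h1
    _ = ∑' b, S.indicator F b := he.tsum_eq (by
        rw [hS]; exact Set.support_indicator_subset)

private lemma key_identity (a b : ℕ → ℝ) (ha : Summable fun n => |a n|)
    (hb : Summable fun n => |b n|) :
    (∑' n, a n) * (∑' n, b n) + ∑' n, a n * b n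
      = (∑' n : ℕ, a n * ∑' m : ℕ, b (n + m))
        + ∑' n : ℕ, (∑' m : ℕ, a (n + m)) * b n := by
  have ha' : Summable fun n => ‖a n‖ := by simpa [Real.norm_eq_abs] using ha
  have hb' : Summable fun n => ‖b n‖ := by simpa [Real.norm_eq_abs] using hb
  set F : ℕ × ℕ → ℝ := fun p => a p.1 * b p.2 with hFdef
  have hF : Summable F := summable_mul_of_summable_norm ha' hb'
  -- the three injections
  have he1 : Function.Injective (fun p : ℕ × ℕ => (p.1, p.1 + p.2)) := by
    rintro ⟨n, m⟩ ⟨n', m'⟩ h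
    simp only [Prod.mk.injEq] at h ⊢
    omega
  have he2 : Function.Injective (fun p : ℕ × ℕ => (p.1 + p.2, p.1)) := by
    rintro ⟨n, m⟩ ⟨n', m'⟩ h
    simp only [Prod.mk.injEq] at h ⊢
    omega
  have hd : Function.Injective (fun n : ℕ => ((n, n) : ℕ × ℕ)) := by
    intro n m h
    simpa using congrArg Prod.fst h
  have hr1 : Set.range (fun p : ℕ × ℕ => (p.1, p.1 + p.2)) = {p : ℕ × ℕ | p.1 ≤ p.2} := by
    ext ⟨n, m⟩
    simp only [Set.mem_range, Set.mem_setOf_eq, Prod.mk.injEq, Prod.exists]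
    constructor
    · rintro ⟨u, v, h1, h2⟩; omega
    · intro h; exact ⟨n, m - n, rfl, by omega⟩
  have hr2 : Set.range (fun p : ℕ × ℕ => (p.1 + p.2, p.1)) = {p : ℕ × ℕ | p.2 ≤ p.1} := by
    ext ⟨n, m⟩
    simp only [Set.mem_range, Set.mem_setOf_eq, Prod.mk.injEq, Prod.exists]
    constructor
    · rintro ⟨u, v, h1, h2⟩; omega
    · intro h; exact ⟨m, n - m, by omega, rfl⟩
  have hrd : Set.range (fun n : ℕ => ((n, n) : ℕ × ℕ)) = {p : ℕ × ℕ | p.1 = p.2} := by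
    ext ⟨n, m⟩
    simp only [Set.mem_range, Set.mem_setOf_eq, Prod.mk.injEq]
    constructor
    · rintro ⟨u, h1, h2⟩; omega
    · intro h; exact ⟨n, rfl, by omega⟩
  have hbn : ∀ n : ℕ, Summable fun m : ℕ => b (n + m) :=
    fun n => hb.of_abs.comp_injective (fun _ _ h => by omega)
  have han : ∀ n : ℕ, Summable fun m : ℕ => a (n + m) :=
    fun n => ha.of_abs.comp_injective (fun _ _ h => by omega)
  have hsum1 : Summable (fun p : ℕ × ℕ => F (p.1, p.1 + p.2)) := hF.comp_injective he1
  have hsum2 : Summable (fun p : ℕ × ℕ => F (p.1 + p.2, p.1)) := hF.comp_injective he2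
  have t1 : (∑' n : ℕ, a n * ∑' m : ℕ, b (n + m))
      = ∑' p : ℕ × ℕ, ({p : ℕ × ℕ | p.1 ≤ p.2}).indicator F p :=
    calc (∑' n : ℕ, a n * ∑' m : ℕ, b (n + m))
        = ∑' (n : ℕ) (m : ℕ), F (n, n + m) :=
          tsum_congr fun n => (tsum_mul_left).symm
      _ = ∑' p : ℕ × ℕ, F (p.1, p.1 + p.2) :=
          (Summable.tsum_prod' hsum1 (fun n => (hbn n).mul_left (a n))).symm
      _ = ∑' p : ℕ × ℕ, ({p : ℕ × ℕ | p.1 ≤ p.2}).indicator F p :=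
          tsum_comp_eq_tsum_indicator F _ he1 _ hr1
  have t2 : (∑' n : ℕ, (∑' m : ℕ, a (n + m)) * b n)
      = ∑' p : ℕ × ℕ, ({p : ℕ × ℕ | p.2 ≤ p.1}).indicator F p :=
    calc (∑' n : ℕ, (∑' m : ℕ, a (n + m)) * b n)
        = ∑' (n : ℕ) (m : ℕ), F (n + m, n) :=
          tsum_congr fun n => (tsum_mul_right).symm
      _ = ∑' p : ℕ × ℕ, F (p.1 + p.2, p.1) :=
          (Summable.tsum_prod' hsum2 (fun n => (han n).mul_right (b n))).symm
      _ = ∑' p : ℕ × ℕ, ({p : ℕ × ℕ | p.2 ≤ p.1}).indicator F p :=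
          tsum_comp_eq_tsum_indicator F _ he2 _ hr2
  have tprod : (∑' n, a n) * (∑' n, b n) = ∑' p : ℕ × ℕ, F p :=
    tsum_mul_tsum_of_summable_norm ha' hb'
  have tdiag : (∑' n, a n * b n)
      = ∑' p : ℕ × ℕ, ({p : ℕ × ℕ | p.1 = p.2}).indicator F p :=
    tsum_comp_eq_tsum_indicator F _ hd _ hrd
  rw [tprod, tdiag, t1, t2,
    ← Summable.tsum_add hF (hF.indicator _),
    ← Summable.tsum_add (hF.indicator _) (hF.indicator _)]
  refine tsum_congr fun p => ?_
  simp only [Set.indicator_apply, Set.mem_setOf_eq]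
  split_ifs <;> first | omega | ring1

/-- The modified Jackson integral `J̄(h)(x) := (1−q) Σ_{n≥0} h(qⁿx)`. -/
noncomputable def Jbar (q : ℝ) (h : ℝ → ℝ) (x : ℝ) : ℝ :=
  (1 - q) * ∑' n : ℕ, h (q ^ n * x)

/-- The modified Jackson integral satisfies the Rota–Baxter relation of weight `1 − q`:
`J̄(f)J̄(g) + (1−q)J̄(fg) = J̄(fJ̄(g)) + J̄(J̄(f)g)` pointwise, for absolutely summable data. -/
theorem Jbar_rota_baxter (q : ℝ) (hq0 : 0 < q) (hq1 : q < 1) (f g : ℝ → ℝ)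
    (hf : ∀ x : ℝ, Summable fun n : ℕ => |f (q ^ n * x)|)
    (hg : ∀ x : ℝ, Summable fun n : ℕ => |g (q ^ n * x)|) (x : ℝ) :
    Jbar q f x * Jbar q g x + (1 - q) * Jbar q (fun y => f y * g y) x =
      Jbar q (fun y => f y * Jbar q g y) x + Jbar q (fun y => Jbar q f y * g y) x := by
  have key := key_identity (fun n => f (q ^ n * x)) (fun n => g (q ^ n * x)) (hf x) (hg x)
  have hcomp : ∀ (h : ℝ → ℝ) (n m : ℕ), h (q ^ m * (q ^ n * x)) = h (q ^ (n + m) * x) := by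
    intro h n m
    rw [pow_add]
    ring_nf
  simp only [Jbar]
  have hg' : ∀ n : ℕ, (∑' m : ℕ, g (q ^ m * (q ^ n * x))) = ∑' m : ℕ, g (q ^ (n + m) * x) :=
    fun n => tsum_congr fun m => hcomp g n m
  have hf' : ∀ n : ℕ, (∑' m : ℕ, f (q ^ m * (q ^ n * x))) = ∑' m : ℕ, f (q ^ (n + m) * x) :=
    fun n => tsum_congr fun m => hcomp f n m
  simp only [hg', hf']
  have p1 : (∑' n : ℕ, f (q ^ n * x) * ((1 - q) * ∑' m : ℕ, g (q ^ (n + m) * x)))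
      = (1 - q) * ∑' n : ℕ, f (q ^ n * x) * ∑' m : ℕ, g (q ^ (n + m) * x) := by
    rw [← tsum_mul_left]
    exact tsum_congr fun n => by ring
  have p2 : (∑' n : ℕ, ((1 - q) * ∑' m : ℕ, f (q ^ (n + m) * x)) * g (q ^ n * x))
      = (1 - q) * ∑' n : ℕ, (∑' m : ℕ, f (q ^ (n + m) * x)) * g (q ^ n * x) := by
    rw [← tsum_mul_left]
    exact tsum_congr fun n => by ring
  rw [p1, p2]
  linear_combination (1 - q) ^ 2 * key
end

section
/- Let A be an associative algebra over a commutative ring k, θ ∈ k, and R : A → A a Rota–Baxter operator of weight θ. Define the double Rota–Baxter product x ∗ y := x R(y) + R(x) y − θ x y and R̃ := θ·id − R. Then for all x, y ∈ A: (i) R(x ∗ y) = R(x) R(y); (ii) R̃(x ∗ y) = − R̃(x) R̃(y); and (iii) R is a Rota–Baxter operator of weight θ for the product ∗, i.e. R(x) ∗ R(y) = R(R(x) ∗ y) + R(x ∗ R(y)) − θ R(x ∗ y). -/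
variable {k A : Type*} [CommRing k] [Ring A] [Algebra k A]

/-- The double Rota–Baxter product `x ∗ y := xR(y) + R(x)y − θxy`. -/
def doubleRB (R : A →ₗ[k] A) (θ : k) (x y : A) : A :=
  x * R y + R x * y - θ • (x * y)

/-- For a Rota–Baxter operator `R` of weight `θ` and the double product
`x ∗ y := xR(y) + R(x)y − θxy` with `R̃ := θ·id − R`:
(i) `R(x ∗ y) = R(x)R(y)`; (ii) `R̃(x ∗ y) = −R̃(x)R̃(y)`; and
(iii) `R` is again a Rota–Baxter operator of weight `θ` for `∗`. -/
theorem double_rota_baxter_product (R : A →ₗ[k] A) (θ : k)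
    (hR : ∀ a b : A, R a * R b = R (R a * b) + R (a * R b) - θ • R (a * b)) :
    (∀ x y : A, R (doubleRB R θ x y) = R x * R y) ∧
      (∀ x y : A, θ • doubleRB R θ x y - R (doubleRB R θ x y) =
        -((θ • x - R x) * (θ • y - R y))) ∧
      (∀ x y : A, doubleRB R θ (R x) (R y) =
        R (doubleRB R θ (R x) y) + R (doubleRB R θ x (R y)) - θ • R (doubleRB R θ x y)) := by
  have hi : ∀ x y : A, R (doubleRB R θ x y) = R x * R y := by
    intro x y
    simp only [doubleRB, map_add, map_sub, map_smul, hR]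
    abel
  refine ⟨hi, ?_, ?_⟩
  · intro x y
    rw [hi]
    simp only [doubleRB, sub_mul, mul_sub, smul_sub, smul_add, neg_sub, smul_mul_assoc,
      mul_smul_comm, smul_smul]
    abel
  · intro x y
    rw [hi x y]
    simp only [doubleRB, map_add, map_sub, map_smul, smul_sub, smul_add]
    rw [hR x (R y), hR (R x) y]
    abel
end

section
/- Let A be an associative algebra over a commutative ring k, θ ∈ k, and R : A → A a Rota–Baxter operator of weight θ. Define a ·_R b := a R(b) − R(b) a + θ b a. Then: (i) ·_R is a right pre-Lie product, i.e. a ·_R (b ·_R c) − (a ·_R b) ·_R c = a ·_R (c ·_R b) − (a ·_R c) ·_R b for all a, b, c ∈ A; and (ii) R satisfies the Rota–Baxter relation of weight θ for ·_R: R(a) ·_R R(b) = R(R(a) ·_R b) + R(a ·_R R(b)) − θ R(a ·_R b) for all a, b ∈ A. -/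
variable {k A : Type*} [CommRing k] [Ring A] [Algebra k A]

/-- The pre-Lie product associated to a Rota–Baxter operator:
`a ·_R b := [a, R(b)] + θba = aR(b) − R(b)a + θba`. -/
def preLieRB (R : A →ₗ[k] A) (θ : k) (a b : A) : A :=
  a * R b - R b * a + θ • (b * a)

/-- For a Rota–Baxter operator `R` of weight `θ`, the product
`a ·_R b := aR(b) − R(b)a + θba` is right pre-Lie, and `R` satisfies the Rota–Baxter
relation of weight `θ` for this product. -/
theorem preLie_rota_baxter (R : A →ₗ[k] A) (θ : k)
    (hR : ∀ a b : A, R a * R b = R (R a * b) + R (a * R b) - θ • R (a * b)) :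
    (∀ a b c : A,
        preLieRB R θ a (preLieRB R θ b c) - preLieRB R θ (preLieRB R θ a b) c =
          preLieRB R θ a (preLieRB R θ c b) - preLieRB R θ (preLieRB R θ a c) b) ∧
      (∀ a b : A, preLieRB R θ (R a) (R b) =
        R (preLieRB R θ (R a) b) + R (preLieRB R θ a (R b)) - θ • R (preLieRB R θ a b)) := by
  have h1 : ∀ x a b : A, x * (R a * R b) =
      x * R (R a * b) + x * R (a * R b) - θ • (x * R (a * b)) := by
    intro x a b; rw [hR]; rw [mul_sub, mul_add, mul_smul_comm]
  have h2 : ∀ a b x : A, R a * (R b * x) =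
      R (R a * b) * x + R (a * R b) * x - θ • (R (a * b) * x) := by
    intro a b x; rw [← mul_assoc, hR, sub_mul, add_mul, smul_mul_assoc]
  constructor
  · intro a b c
    simp only [preLieRB, map_add, map_sub, map_smul, mul_sub, sub_mul, mul_add, add_mul,
      smul_sub, smul_add, smul_mul_assoc, mul_smul_comm, smul_smul, mul_assoc, hR, h1, h2]
    abel
  · intro a b
    simp only [preLieRB, map_add, map_sub, map_smul, mul_sub, sub_mul, mul_add, add_mul,
      smul_sub, smul_add, smul_mul_assoc, mul_smul_comm, smul_smul, mul_assoc, hR, h1, h2]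
    abel
end

section
/- Let A be an associative algebra over a field K and let θ ∈ K be nonzero. A K-linear map R : A → A satisfies the Rota–Baxter relation of weight θ (R(X)R(Y) = R(R(X)Y) + R(XR(Y)) − θR(XY) for all X, Y) if and only if for all X, Y ∈ A there exists Z ∈ A such that R(X)R(Y) = R(Z) and (θX − R(X))(θY − R(Y)) = −(θZ − R(Z)). In particular, when R is Rota–Baxter of weight θ, both R(A) and (θ·id − R)(A) are subalgebras of A. (Atkinson's decomposition theorem.) -/
variable {K A : Type*} [Field K] [Ring A] [Algebra K A]

lemma atkinson_expand (θ : K) (x y u v : A) :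
    (θ • x - u) * (θ • y - v) =
      (θ * θ) • (x * y) - θ • (x * v) - θ • (u * y) + u * v := by
  simp only [sub_mul, mul_sub, smul_mul_assoc, mul_smul_comm]
  module

/-- **Atkinson's decomposition theorem.** For `θ ≠ 0`, a linear map `R : A → A` is a
Rota–Baxter operator of weight `θ` if and only if for all `X, Y` there is a `Z` with
`R(X)R(Y) = R(Z)` and `(θX − R(X))(θY − R(Y)) = −(θZ − R(Z))`. In particular, when `R` is
Rota–Baxter of weight `θ`, the images of `R` and of `θ·id − R` are closed under
multiplication (are subalgebras). -/
theorem atkinson_decomposition (θ : K) (hθ : θ ≠ 0) (R : A →ₗ[K] A) :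
    ((∀ a b : A, R a * R b = R (R a * b) + R (a * R b) - θ • R (a * b)) ↔
      (∀ X Y : A, ∃ Z : A,
        R X * R Y = R Z ∧ (θ • X - R X) * (θ • Y - R Y) = -(θ • Z - R Z))) ∧
    ((∀ a b : A, R a * R b = R (R a * b) + R (a * R b) - θ • R (a * b)) →
      (∀ x ∈ LinearMap.range R, ∀ y ∈ LinearMap.range R, x * y ∈ LinearMap.range R) ∧
      (∀ x ∈ LinearMap.range (θ • (LinearMap.id : A →ₗ[K] A) - R),
        ∀ y ∈ LinearMap.range (θ • (LinearMap.id : A →ₗ[K] A) - R),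
          x * y ∈ LinearMap.range (θ • (LinearMap.id : A →ₗ[K] A) - R))) := by
  constructor
  · constructor
    · intro h X Y
      refine ⟨R X * Y + X * R Y - θ • (X * Y), ?_, ?_⟩
      · rw [map_sub, map_add, map_smul, h]
      · have hZ : R (R X * Y + X * R Y - θ • (X * Y)) = R X * R Y := by
          rw [map_sub, map_add, map_smul, h]
        rw [hZ, atkinson_expand, smul_sub, smul_add, smul_smul]
        abel
    · intro h a b
      obtain ⟨Z, h1, h2⟩ := h a b
      have h3 : θ • Z = R Z - (θ • a - R a) * (θ • b - R b) := by
        rw [h2]; abel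
      have key : θ • Z = θ • (R a * b + a * R b - θ • (a * b)) := by
        rw [h3, ← h1, atkinson_expand, smul_sub, smul_add, smul_smul]
        abel
      have hZ : Z = R a * b + a * R b - θ • (a * b) := smul_right_injective A hθ key
      rw [hZ, map_sub, map_add, map_smul] at h1
      exact h1
  · intro h
    constructor
    · rintro x ⟨a, rfl⟩ y ⟨b, rfl⟩
      exact ⟨R a * b + a * R b - θ • (a * b), by rw [map_sub, map_add, map_smul, h]⟩
    · rintro x ⟨a, rfl⟩ y ⟨b, rfl⟩
      refine ⟨-(R a * b + a * R b - θ • (a * b)), ?_⟩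
      simp only [LinearMap.sub_apply, LinearMap.smul_apply, LinearMap.id_apply, map_neg,
        map_sub, map_add, map_smul, smul_neg]
      rw [atkinson_expand, h]
      module
end

section
/- Let A be an associative unital algebra over a commutative ring k, θ ∈ k, and R : A → A a Rota–Baxter operator of weight θ; set R̃ := θ·id − R. Suppose a, X, Y ∈ A satisfy the fixed-point equations X = 1 + R(aX) and Y = 1 + R̃(Ya). Then Y (1 − θa) X = 1. (Atkinson's multiplicative factorization.) -/
variable {k A : Type*} [CommRing k] [Ring A] [Algebra k A]

/-- **Atkinson's multiplicative factorization.** Let `R` be a Rota–Baxter operator of weight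
`θ` on a unital associative algebra `A` and `R̃ := θ·id − R`. If `X = 1 + R(aX)` and
`Y = 1 + R̃(Ya)`, then `Y(1 − θa)X = 1`. -/
theorem atkinson_factorization (θ : k) (R : A →ₗ[k] A)
    (hR : ∀ a b : A, R a * R b = R (R a * b) + R (a * R b) - θ • R (a * b))
    (a X Y : A)
    (hX : X = 1 + R (a * X))
    (hY : Y = 1 + (θ • (Y * a) - R (Y * a))) :
    Y * (1 - θ • a) * X = 1 := by
  have h1 := hR (Y * a) (a * X)
  have hA : R (Y * (a * X)) =
      R (a * X) + θ • R (Y * a * (a * X)) - R (R (Y * a) * (a * X)) := by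
    conv_lhs => rw [hY]
    rw [add_mul, one_mul, sub_mul, smul_mul_assoc, map_add, map_sub, map_smul]
    abel
  have hB : Y * a * X = Y * a + Y * a * R (a * X) := by
    conv_lhs => rw [hX]
    rw [mul_add, mul_one]
  have key : R (a * X) + (θ • (Y * a) - R (Y * a))
      + (θ • (Y * a) - R (Y * a)) * R (a * X) = θ • (Y * (a * X)) := by
    rw [sub_mul, smul_mul_assoc, h1]
    have hD : θ • (Y * (a * X)) = R (Y * (a * X)) + (θ • (Y * a * X) - R (Y * a * X)) := by
      rw [mul_assoc]; abel
    rw [hD, hA, hB, map_add, smul_add]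
    abel
  have expand : Y * (1 - θ • a) * X = Y * X - θ • (Y * (a * X)) := by
    rw [mul_sub, mul_one, sub_mul, mul_smul_comm, smul_mul_assoc, mul_assoc]
  have hYX : Y * X = 1 + (R (a * X) + (θ • (Y * a) - R (Y * a))
      + (θ • (Y * a) - R (Y * a)) * R (a * X)) := by
    conv_lhs => rw [hY, hX]
    noncomm_ring
  rw [expand, ← key, hYX]
  abel
end

section
/- Let A be an associative algebra over a commutative ring k, θ ∈ k, and R : A → A a Rota–Baxter operator of weight θ. Then for every nonempty finite ordered family x₁, …, xₙ ∈ A (a list), θ · (R(x₁) R(x₂) ⋯ R(xₙ)) = R( R(x₁)⋯R(xₙ) − (R(x₁) − θx₁)(R(x₂) − θx₂)⋯(R(xₙ) − θxₙ) ), where all products are taken in the given order. Equivalently, θ ∏_{i=1}^{n} R(x_i) = R( ∏_{i=1}^{n} R(x_i) − ∏_{i=1}^{n} R̃(−x_i) ) with R̃ = θ·id − R. -/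
variable {k A : Type*} [CommRing k] [Ring A] [Algebra k A]

/-- For a Rota–Baxter operator `R` of weight `θ` and any nonempty list `x₁, …, xₙ`:
`θ·(R(x₁)⋯R(xₙ)) = R(R(x₁)⋯R(xₙ) − (R(x₁) − θx₁)⋯(R(xₙ) − θxₙ))`,
all products taken in the given order (note `R̃(−x) = R(x) − θx` for `R̃ = θ·id − R`). -/
theorem rota_baxter_prod_identity (θ : k) (R : A →ₗ[k] A)
    (hR : ∀ a b : A, R a * R b = R (R a * b) + R (a * R b) - θ • R (a * b))
    (l : List A) (hl : l ≠ []) :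
    θ • (l.map fun x => R x).prod =
      R ((l.map fun x => R x).prod - (l.map fun x => R x - θ • x).prod) := by
  induction l with
  | nil => exact absurd rfl hl
  | cons x t ih =>
    cases t with
    | nil =>
      simp [map_sub, map_smul]
    | cons y s =>
      have IH := ih (by simp)
      set P := (((y :: s)).map fun x => R x).prod with hP
      set Q := (((y :: s)).map fun x => R x - θ • x).prod with hQ
      simp only [List.map_cons, List.prod_cons, ← hP, ← hQ]
      calc θ • (R x * P) = R x * (θ • P) := (mul_smul_comm θ (R x) P).symm
        _ = R x * R (P - Q) := by rw [IH]
        _ = R (R x * (P - Q)) + R (x * R (P - Q)) - θ • R (x * (P - Q)) := hR x (P - Q)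
        _ = R (R x * (P - Q)) + R (x * (θ • P)) - θ • R (x * (P - Q)) := by rw [IH]
        _ = R (R x * P - (R x - θ • x) * Q) := by
            simp only [mul_sub, sub_mul, map_sub, mul_smul_comm, smul_mul_assoc,
              map_smul, smul_sub]
            abel
end

section
/- Let A be a commutative algebra over a commutative ring k, θ ∈ k, and R : A → A a Rota–Baxter operator of weight θ. Fix n ≥ 1 and s₁, …, sₙ ∈ A. Then Σ_{σ ∈ Sₙ} R( s_{σ(1)} R( s_{σ(2)} ⋯ R(s_{σ(n)}) ⋯ ) ) = Σ_{𝒯} θ^{n − |𝒯|} ∏_{T ∈ 𝒯} (|T| − 1)! · R( ∏_{j ∈ T} s_j ), where the right-hand sum runs over all (unordered) set partitions 𝒯 of {1, …, n}, |𝒯| is the number of blocks of 𝒯, and |T| is the size of the block T. (Bohnenblust–Spitzer formula of weight θ.) -/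
open Finset

variable {k A : Type*} [CommRing k] [CommRing A] [Algebra k A]

/-- The nested Rota–Baxter expression `R(a₁ R(a₂ ⋯ R(aₙ)⋯))` of a list `[a₁, …, aₙ]`. -/
def nestedRB (R : A →ₗ[k] A) : List A → A
  | [] => 1
  | a :: l => R (a * nestedRB R l)

/-!
Both sides satisfy the same recursion when a letter `s₀` is added to `s₁, …, sₙ`.
Summing the nested expression over all insertions of a letter `c` into a fixed word `w` gives
`R(c)·R(w) + θ·Σⱼ R(w with c multiplied into its j-th letter)` (induction on `w`, one use of the
Rota–Baxter identity per step). Summed over all orderings of `w`, the left-hand side for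
`s₀, …, sₙ` is `R(s₀)` times the one for `s₁, …, sₙ`, plus `θ` times the sum over `j` of the one
for `s₁, …, s₀sⱼ, …, sₙ`. A partition of `{0, …, n}` comes from a partition of `{1, …, n}` by adding
`0` either as a singleton block, contributing `R(s₀)`, or to a block `T`, which turns `(|T|-1)!`
into `|T|! = Σ_{j ∈ T} (|T|-1)!`: these are exactly the merged terms.
-/

theorem List.sum_map_flatMap {α β M : Type*} [AddCommMonoid M] (l : List α) (g : α → List β)
    (f : β → M) : ((l.flatMap g).map f).sum = (l.map fun a => ((g a).map f).sum).sum := by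
  simp only [List.flatMap, List.map_flatten, List.map_map, List.sum_flatten]; rfl

theorem List.sum_map_finset_sum_comm {α β M : Type*} [AddCommMonoid M] (l : List α)
    (t : Finset β) (f : α → β → M) :
    (l.map fun a => ∑ b ∈ t, f a b).sum = ∑ b ∈ t, (l.map fun a => f a b).sum := by
  simpa using Multiset.sum_map_sum (m := (l : Multiset α)) (s := t) (f := f)

theorem sum_perm_ofFn_eq_sum_permutations' {M : Type*} [AddCommMonoid M] (n : ℕ)
    (f : List (Fin n) → M) :
    ∑ σ : Equiv.Perm (Fin n), f (List.ofFn σ) = ((List.finRange n).permutations'.map f).sum := by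
  have hnodup := List.nodup_permutations _ (List.nodup_finRange n)
  have hinj : Function.Injective fun σ : Equiv.Perm (Fin n) => List.ofFn σ :=
    fun σ τ h => Equiv.coe_fn_injective (List.ofFn_injective h)
  -- Both finsets have `n!` elements, so the inclusion is an equality.
  have himage : univ.image (fun σ : Equiv.Perm (Fin n) => List.ofFn σ) =
      (List.finRange n).permutations.toFinset := by
    refine eq_of_subset_of_card_le (fun l hl => ?_) ?_
    · obtain ⟨σ, -, rfl⟩ := mem_image.1 hl
      rw [List.mem_toFinset, List.mem_permutations, List.ofFn_eq_map]
      exact σ.map_finRange_perm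
    · rw [card_image_of_injective _ hinj, List.toFinset_card_of_nodup hnodup,
        List.length_permutations, card_univ, Fintype.card_perm, Fintype.card_fin,
        List.length_finRange]
  rw [← ((List.permutations_perm_permutations' _).map f).sum_eq, ← List.sum_toFinset f hnodup,
    ← himage, sum_image fun σ _ τ _ h => hinj h]

namespace Finpartition

variable {ι : Type*} [DecidableEq ι] {S T : Finset ι} {m : ι}

theorem subset_of_mem_insert_empty_parts (Q : Finpartition S) (hT : T ∈ insert ∅ Q.parts) :
    T ⊆ S := by
  rcases mem_insert.1 hT with rfl | hT
  exacts [empty_subset S, Q.le hT]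

theorem insert_notMem_parts (Q : Finpartition S) (hm : m ∉ S) (T : Finset ι) :
    insert m T ∉ Q.parts :=
  fun h => hm (Q.le h (mem_insert_self m T))

theorem union_sup_erase_parts (Q : Finpartition S) (hT : T ∈ insert ∅ Q.parts) :
    T ∪ (Q.parts.erase T).sup id = S := by
  rcases mem_insert.1 hT with rfl | hT
  · rw [erase_eq_of_notMem Q.empty_notMem_parts, empty_union, Q.sup_parts]
  · calc T ∪ (Q.parts.erase T).sup id = (insert T (Q.parts.erase T)).sup id := sup_insert.symm
      _ = S := by rw [insert_erase hT, Q.sup_parts]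

/-- Adds `m` to the block `T` of `Q`; the choice `T = ∅` adds `{m}` as a new block. -/
def insertInto (Q : Finpartition S) (hm : m ∉ S) (hT : T ∈ insert ∅ Q.parts) :
    Finpartition (insert m S) where
  parts := insert (insert m T) (Q.parts.erase T)
  supIndep := by
    rw [supIndep_iff_pairwiseDisjoint, coe_insert]
    refine (Q.disjoint.subset (coe_subset.2 (erase_subset _ _))).insert fun U hU _ => ?_
    obtain ⟨hUT, hU⟩ := mem_erase.1 hU
    refine disjoint_insert_left.2 ⟨fun h => hm (Q.le hU h), ?_⟩
    rcases mem_insert.1 hT with rfl | hT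
    · exact disjoint_empty_left U
    · exact Q.disjoint hT hU (Ne.symm hUT)
  sup_parts := by
    rw [sup_insert, id, sup_eq_union, insert_union, Q.union_sup_erase_parts hT]
  bot_notMem h := by
    rcases mem_insert.1 h with h | h
    · exact insert_ne_empty m T h.symm
    · exact Q.bot_notMem (mem_of_mem_erase h)

theorem insertInto_parts (Q : Finpartition S) (hm : m ∉ S) (hT : T ∈ insert ∅ Q.parts) :
    (Q.insertInto hm hT).parts = insert (insert m T) (Q.parts.erase T) := rfl

theorem part_insertInto (Q : Finpartition S) (hm : m ∉ S) (hT : T ∈ insert ∅ Q.parts) :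
    (Q.insertInto hm hT).part m = insert m T :=
  part_eq_of_mem _ (mem_insert_self _ _) (mem_insert_self _ _)

theorem mem_restrict_parts {s t X : Finset ι} (P : Finpartition s) (h : t ⊆ s) :
    X ∈ (P.restrict h).parts ↔ X ≠ ∅ ∧ ∃ U ∈ P.parts, U ∩ t = X := by
  simp [restrict]

theorem restrict_insertInto (Q : Finpartition S) (hm : m ∉ S) (hT : T ∈ insert ∅ Q.parts) :
    (Q.insertInto hm hT).restrict (subset_insert m S) = Q := by
  have hmT : insert m T ∩ S = T := by
    rw [insert_inter_of_notMem hm, inter_eq_left.2 (Q.subset_of_mem_insert_empty_parts hT)]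
  ext X
  rw [mem_restrict_parts, insertInto_parts]
  constructor
  · rintro ⟨hX, U, hU, rfl⟩
    rcases mem_insert.1 hU with rfl | hU
    · rw [hmT] at hX ⊢
      exact (mem_insert.1 hT).resolve_left hX
    · rw [inter_eq_left.2 (Q.le (mem_of_mem_erase hU))]
      exact mem_of_mem_erase hU
  · intro hX
    refine ⟨Q.ne_empty hX, ?_⟩
    by_cases hXT : X = T
    · exact ⟨insert m T, mem_insert_self _ _, hmT.trans hXT.symm⟩
    · exact ⟨X, mem_insert_of_mem (mem_erase.2 ⟨hXT, hX⟩), inter_eq_left.2 (Q.le hX)⟩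

theorem subset_of_mem_parts_of_ne_part (P : Finpartition (insert m S)) {U : Finset ι}
    (hU : U ∈ P.parts) (hUm : U ≠ P.part m) : U ⊆ S := by
  have hmU : m ∉ U := fun h => hUm (P.part_eq_of_mem hU h).symm
  exact (subset_insert_iff_of_notMem hmU).1 (P.le hU)

theorem part_inter_eq_erase (P : Finpartition (insert m S)) (hm : m ∉ S) :
    P.part m ∩ S = (P.part m).erase m := by
  ext x
  have := P.part_subset (a := m)
  grind

theorem erase_part_mem_insert_empty_restrict_parts (P : Finpartition (insert m S)) (hm : m ∉ S) :
    (P.part m).erase m ∈ insert ∅ (P.restrict (subset_insert m S)).parts := by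
  by_cases h : (P.part m).erase m = ∅
  · exact h ▸ mem_insert_self _ _
  · exact mem_insert_of_mem ((mem_restrict_parts _ _).2
      ⟨h, P.part m, P.part_mem.2 (mem_insert_self m S), P.part_inter_eq_erase hm⟩)

theorem insertInto_restrict (P : Finpartition (insert m S)) (hm : m ∉ S) :
    (P.restrict (subset_insert m S)).insertInto hm
      (P.erase_part_mem_insert_empty_restrict_parts hm) = P := by
  have hmB : m ∈ P.part m := P.mem_part (mem_insert_self m S)
  ext X
  rw [insertInto_parts, insert_erase hmB, mem_insert, mem_erase, mem_restrict_parts]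
  constructor
  · rintro (rfl | ⟨hXB, -, U, hU, rfl⟩)
    · exact P.part_mem.2 (mem_insert_self m S)
    · have hUB : U ≠ P.part m := by rintro rfl; exact hXB (P.part_inter_eq_erase hm)
      rwa [inter_eq_left.2 (P.subset_of_mem_parts_of_ne_part hU hUB)]
  · intro hX
    by_cases hXB : X = P.part m
    · exact Or.inl hXB
    · refine Or.inr ⟨fun h => hXB ?_, P.ne_empty hX, X, hX,
        inter_eq_left.2 (P.subset_of_mem_parts_of_ne_part hX hXB)⟩
      obtain ⟨x, hx⟩ := P.nonempty_of_mem_parts hX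
      exact P.eq_of_mem_parts hX (P.part_mem.2 (mem_insert_self m S)) hx
        (mem_of_mem_erase (h ▸ hx))

theorem sum_finpartition_insert {M : Type*} [AddCommMonoid M] (hm : m ∉ S)
    (F : Finset (Finset ι) → M) :
    ∑ P : Finpartition (insert m S), F P.parts =
      ∑ Q : Finpartition S, ∑ T ∈ insert ∅ Q.parts, F (insert (insert m T) (Q.parts.erase T)) := by
  rw [sum_sigma']
  refine sum_bij' (fun P _ => ⟨P.restrict (subset_insert m S), (P.part m).erase m⟩)
    (fun x hx => x.1.insertInto hm (mem_sigma.1 hx).2)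
    (fun P _ => mem_sigma.2 ⟨mem_univ _, P.erase_part_mem_insert_empty_restrict_parts hm⟩)
    (fun _ _ => mem_univ _) (fun P _ => P.insertInto_restrict hm) (fun ⟨Q, T⟩ hx => ?_)
    (fun P _ => congrArg (F ∘ parts) (P.insertInto_restrict hm).symm)
  have hT := (mem_sigma.1 hx).2
  have hmT : m ∉ T := fun h => hm (Q.subset_of_mem_insert_empty_parts hT h)
  exact Sigma.ext (Q.restrict_insertInto hm hT)
    (heq_of_eq (by rw [part_insertInto, erase_insert hmT]))

end Finpartition

section PartitionSum

variable {ι : Type*} [DecidableEq ι]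

def blockWeight (f : A → A) (s : ι → A) (T : Finset ι) : A :=
  (#T - 1).factorial • f (∏ j ∈ T, s j)

def partitionWeight (θ : k) (f : A → A) (S : Finset ι) (s : ι → A) (X : Finset (Finset ι)) : A :=
  θ ^ (#S - #X) • ∏ T ∈ X, blockWeight f s T

def partitionSum (θ : k) (f : A → A) (S : Finset ι) (s : ι → A) : A :=
  ∑ P : Finpartition S, partitionWeight θ f S s P.parts

variable {θ : k} {f : A → A} {s : ι → A} {m : ι} {S T : Finset ι}

theorem blockWeight_insert (hmT : m ∉ T) :
    blockWeight f s (insert m T) = (#T).factorial • f (s m * ∏ j ∈ T, s j) := by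
  rw [blockWeight, card_insert_of_notMem hmT, Nat.add_sub_cancel, prod_insert hmT]

theorem blockWeight_update_of_notMem {j : ι} (c : A) (hj : j ∉ T) :
    blockWeight f (Function.update s j c) T = blockWeight f s T := by
  simp only [blockWeight,
    prod_congr rfl fun i hi => Function.update_of_ne (ne_of_mem_of_not_mem hi hj) c s]

theorem sum_blockWeight_update_mul (c : A) (hT : T.Nonempty) :
    ∑ j ∈ T, blockWeight f (Function.update s j (c * s j)) T =
      (#T).factorial • f (c * ∏ j ∈ T, s j) := by
  have hupd : ∀ j ∈ T, ∏ i ∈ T, Function.update s j (c * s j) i = c * ∏ i ∈ T, s i := by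
    intro j hj
    rw [prod_update_of_mem hj, sdiff_singleton_eq_erase, mul_assoc, mul_prod_erase T s hj]
  rw [sum_congr rfl fun j hj => by rw [blockWeight, hupd j hj], sum_const, smul_smul,
    Nat.mul_factorial_pred hT.card_pos.ne']

theorem sum_prod_blockWeight_update_mul (Q : Finpartition S) (c : A) :
    ∑ j ∈ S, ∏ U ∈ Q.parts, blockWeight f (Function.update s j (c * s j)) U =
      ∑ T ∈ Q.parts, (#T).factorial • f (c * ∏ j ∈ T, s j) *
        ∏ U ∈ Q.parts.erase T, blockWeight f s U := by
  nth_rw 1 [← Q.biUnion_parts]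
  rw [sum_biUnion Q.disjoint]
  refine sum_congr rfl fun T hT => ?_
  have hrest : ∀ j ∈ T, ∏ U ∈ Q.parts.erase T, blockWeight f (Function.update s j (c * s j)) U =
      ∏ U ∈ Q.parts.erase T, blockWeight f s U := by
    intro j hj
    refine prod_congr rfl fun U hU => blockWeight_update_of_notMem _ fun hjU => ?_
    exact (mem_erase.1 hU).1 (Q.eq_of_mem_parts (mem_of_mem_erase hU) hT hjU hj)
  simp only [id, ← mul_prod_erase _ _ hT]
  rw [sum_congr rfl fun j hj => by rw [hrest j hj], ← sum_mul,
    sum_blockWeight_update_mul c (Q.nonempty_of_mem_parts hT)]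

theorem partitionWeight_insert_singleton (Q : Finpartition S) (hm : m ∉ S) :
    partitionWeight θ f (insert m S) s (insert {m} Q.parts) =
      f (s m) * partitionWeight θ f S s Q.parts := by
  have hmQ := Q.insert_notMem_parts hm ∅
  rw [insert_empty] at hmQ
  rw [partitionWeight, partitionWeight, prod_insert hmQ, card_insert_of_notMem hmQ,
    card_insert_of_notMem hm, Nat.add_sub_add_right, mul_smul_comm]
  simp [blockWeight]

theorem sum_partitionWeight_insert_into_parts (Q : Finpartition S) (hm : m ∉ S) :
    ∑ T ∈ Q.parts, partitionWeight θ f (insert m S) s (insert (insert m T) (Q.parts.erase T)) =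
      θ • ∑ j ∈ S, partitionWeight θ f S (Function.update s j (s m * s j)) Q.parts := by
  simp only [partitionWeight]
  rw [← smul_sum, sum_prod_blockWeight_update_mul, smul_sum, smul_sum]
  refine sum_congr rfl fun T hT => ?_
  have hnotMem : insert m T ∉ Q.parts.erase T :=
    fun h => Q.insert_notMem_parts hm T (mem_of_mem_erase h)
  have hcard : #(insert m S) - #(insert (insert m T) (Q.parts.erase T)) = #S - #Q.parts + 1 := by
    rw [card_insert_of_notMem hnotMem, card_erase_of_mem hT, card_insert_of_notMem hm]
    have := card_pos.2 ⟨T, hT⟩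
    have := Q.card_parts_le_card
    omega
  rw [hcard, pow_succ', mul_smul, prod_insert hnotMem,
    blockWeight_insert fun h => hm (Q.le hT h)]

theorem partitionSum_empty (θ : k) : partitionSum θ f ∅ s = 1 := by
  have : Unique (Finpartition (∅ : Finset ι)) := inferInstanceAs (Unique (Finpartition ⊥))
  rw [partitionSum, Fintype.sum_unique, Finpartition.parts_eq_empty_iff.2 rfl]
  simp [partitionWeight]

theorem partitionSum_insert (θ : k) (hm : m ∉ S) :
    partitionSum θ f (insert m S) s = f (s m) * partitionSum θ f S s +
      θ • ∑ j ∈ S, partitionSum θ f S (Function.update s j (s m * s j)) := by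
  have hQ : ∀ Q : Finpartition S, ∑ T ∈ insert ∅ Q.parts,
      partitionWeight θ f (insert m S) s (insert (insert m T) (Q.parts.erase T)) =
        f (s m) * partitionWeight θ f S s Q.parts +
          θ • ∑ j ∈ S, partitionWeight θ f S (Function.update s j (s m * s j)) Q.parts := by
    intro Q
    rw [sum_insert Q.empty_notMem_parts, erase_eq_of_notMem Q.empty_notMem_parts, insert_empty,
      partitionWeight_insert_singleton Q hm, sum_partitionWeight_insert_into_parts Q hm]
  simp only [partitionSum, Finpartition.sum_finpartition_insert hm, hQ, sum_add_distrib, mul_sum,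
    smul_sum]
  rw [sum_comm (s := S)]

end PartitionSum

section NestedSum

variable {ι : Type*} [DecidableEq ι] {θ : k} {R : A →ₗ[k] A}

theorem LinearMap.list_sum_map_apply_mul_left {α : Type*} (R : A →ₗ[k] A) (c : A) (g : α → A)
    (X : List α) : (X.map fun x => R (c * g x)).sum = R (c * (X.map g).sum) := by
  rw [← List.sum_map_mul_left, map_list_sum, List.map_map]; rfl

theorem sum_nestedRB_permutations'Aux
    (hR : ∀ a b : A, R a * R b = R (R a * b) + R (a * R b) - θ • R (a * b))
    (m : ι) {l : List ι} (hl : l.Nodup) (s : ι → A) :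
    ((List.permutations'Aux m l).map fun l' => nestedRB R (l'.map s)).sum =
      R (s m) * nestedRB R (l.map s) +
        θ • (l.map fun j => nestedRB R (l.map (Function.update s j (s m * s j)))).sum := by
  induction l with
  | nil => simp [nestedRB]
  | cons a l ih =>
    obtain ⟨hal, hl⟩ := List.nodup_cons.1 hl
    have hne : ∀ j ∈ l, a ≠ j := fun j hj h => hal (h ▸ hj)
    have hmap : l.map (Function.update s a (s m * s a)) = l.map s :=
      List.map_congr_left fun j hj => Function.update_of_ne (hne j hj).symm _ _
    have hfix : (l.map fun j => nestedRB R (Function.update s j (s m * s j) a ::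
        l.map (Function.update s j (s m * s j)))) =
        l.map fun j => R (s a * nestedRB R (l.map (Function.update s j (s m * s j)))) :=
      List.map_congr_left fun j hj => by rw [Function.update_of_ne (hne j hj)]; rfl
    simp only [List.permutations'Aux, List.map_cons, List.map_map, Function.comp_def,
      List.sum_cons, Function.update_self, hmap]
    rw [hfix]
    simp only [nestedRB, LinearMap.list_sum_map_apply_mul_left, ih hl, mul_add, mul_smul_comm,
      map_add, map_smul]
    rw [hR, mul_left_comm (R (s m)), ← mul_assoc (s m), smul_add]
    abel

variable (R) in
def permNestedSum (l : List ι) (s : ι → A) : A :=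
  (l.permutations'.map fun l' => nestedRB R (l'.map s)).sum

theorem permNestedSum_cons
    (hR : ∀ a b : A, R a * R b = R (R a * b) + R (a * R b) - θ • R (a * b))
    (m : ι) {l : List ι} (hl : l.Nodup) (s : ι → A) :
    permNestedSum R (m :: l) s = R (s m) * permNestedSum R l s +
      θ • ∑ j ∈ l.toFinset, permNestedSum R l (Function.update s j (s m * s j)) := by
  have hinsert : ∀ l' ∈ l.permutations', ((List.permutations'Aux m l').map
      fun l'' => nestedRB R (l''.map s)).sum = R (s m) * nestedRB R (l'.map s) +
        θ • ∑ j ∈ l.toFinset, nestedRB R (l'.map (Function.update s j (s m * s j))) := by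
    intro l' hl'
    have hl'l : l'.Perm l := List.mem_permutations'.1 hl'
    rw [sum_nestedRB_permutations'Aux hR m (hl'l.nodup_iff.2 hl),
      List.toFinset_eq_of_perm _ _ hl'l.symm, List.sum_toFinset _ (hl'l.nodup_iff.2 hl)]
  rw [permNestedSum, List.permutations', List.sum_map_flatMap, List.map_congr_left hinsert,
    List.sum_map_add, List.sum_map_mul_left]
  simp only [permNestedSum, smul_sum, List.smul_sum, List.map_map, Function.comp_def]
  rw [List.sum_map_finset_sum_comm]

theorem permNestedSum_eq_partitionSum
    (hR : ∀ a b : A, R a * R b = R (R a * b) + R (a * R b) - θ • R (a * b))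
    {l : List ι} (hl : l.Nodup) (s : ι → A) :
    permNestedSum R l s = partitionSum θ R l.toFinset s := by
  induction l generalizing s with
  | nil =>
    rw [List.toFinset_nil, partitionSum_empty]
    simp [permNestedSum, List.permutations', nestedRB]
  | cons m l ih =>
    obtain ⟨hml, hl⟩ := List.nodup_cons.1 hl
    rw [permNestedSum_cons hR m hl, ih hl, List.toFinset_cons,
      partitionSum_insert θ (mt List.mem_toFinset.1 hml)]
    simp only [ih hl]

end NestedSum

theorem bohnenblust_spitzer_general (θ : k) (R : A →ₗ[k] A)
    (hR : ∀ a b : A, R a * R b = R (R a * b) + R (a * R b) - θ • R (a * b))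
    (n : ℕ) (s : Fin n → A) :
    ∑ σ : Equiv.Perm (Fin n), nestedRB R (List.ofFn fun i => s (σ i)) =
      ∑ P : Finpartition (Finset.univ : Finset (Fin n)),
        θ ^ (n - P.parts.card) •
          ∏ T ∈ P.parts, (T.card - 1).factorial • R (∏ j ∈ T, s j) := by
  calc ∑ σ : Equiv.Perm (Fin n), nestedRB R (List.ofFn fun i => s (σ i))
      = permNestedSum R (List.finRange n) s := by
        simp only [permNestedSum, ← sum_perm_ofFn_eq_sum_permutations', List.map_ofFn]
        rfl
    _ = partitionSum θ R univ s := by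
        rw [permNestedSum_eq_partitionSum hR (List.nodup_finRange n), List.toFinset_finRange]
    _ = _ := by simp only [partitionSum, partitionWeight, blockWeight, card_univ, Fintype.card_fin]

/-- **Bohnenblust–Spitzer formula of weight `θ`.** For a Rota–Baxter operator `R` of weight
`θ` on a commutative algebra, `n ≥ 1` and `s₁, …, sₙ`:
`Σ_{σ ∈ Sₙ} R(s_{σ(1)}R(s_{σ(2)}⋯R(s_{σ(n)})⋯)) =
 Σ_{𝒯} θ^{n−|𝒯|} ∏_{T ∈ 𝒯} (|T|−1)!·R(∏_{j∈T} s_j)`,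
where `𝒯` runs over set partitions of `{1,…,n}`. -/
theorem bohnenblust_spitzer (θ : k) (R : A →ₗ[k] A)
    (hR : ∀ a b : A, R a * R b = R (R a * b) + R (a * R b) - θ • R (a * b))
    (n : ℕ) (hn : 1 ≤ n) (s : Fin n → A) :
    ∑ σ : Equiv.Perm (Fin n), nestedRB R (List.ofFn fun i => s (σ i)) =
      ∑ P : Finpartition (Finset.univ : Finset (Fin n)),
        θ ^ (n - P.parts.card) •
          ∏ T ∈ P.parts, (T.card - 1).factorial • R (∏ j ∈ T, s j) :=
  bohnenblust_spitzer_general θ R hR n s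
end
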